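/- In the jump-diffusion model dS = S_-(γ n⁺ − γ n⁻ + δ dt) driven by two independent compensated Poisson processes n^± with intensity α = 1, with γ ∈ (0,1), δ = (2+ε)γ for some ε > 0: (i) the minimal signed martingale density Ẑ = E(−λ·M) takes negative values with positive probability; (ii) the measure Q with dQ/dP = E(βn⁺ + (β+2+ε)n⁻)_T for any β ∈ (−1, ∞) is an equivalent martingale measure for S with square-integrable density, so P^2_e(S) ≠ ∅. -/

import Mathlib

open MeasureTheory

variable {Ω : Type*} {m : MeasurableSpace Ω}

/-- `N` is a Poisson process with unit intensity, adapted to `F`, with increments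
independent of the past. -/
def IsUnitPoissonProcess (μ : Measure Ω) (F : Filtration ℝ m)
    (N : ℝ → Ω → ℕ) : Prop :=
  (∀ ω, N 0 ω = 0) ∧
  (∀ ω s t, 0 ≤ s → s ≤ t → N s ω ≤ N t ω) ∧
  (∀ t, Measurable[F t] (N t)) ∧
  (∀ s t, 0 ≤ s → s ≤ t →
    Measure.map (fun ω => N t ω - N s ω) μ =
      ProbabilityTheory.poissonMeasure (Real.toNNReal (t - s))) ∧
  (∀ s t, 0 ≤ s → s ≤ t →
    ProbabilityTheory.Indep
      (MeasurableSpace.comap (fun ω => N t ω - N s ω) inferInstance) (F s) μ)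

/-- The price process `S` of Example 5.3: the stochastic exponential of
`R = γ n⁺ - γ n⁻ + δ t`, explicitly
`S_t = S₀ e^{δt} (1+γ)^{N⁺_t} (1-γ)^{N⁻_t}`. -/
noncomputable def jumpStock (S0 γ δ : ℝ) (Np Nm : ℝ → Ω → ℕ)
    (t : ℝ) (ω : Ω) : ℝ :=
  S0 * Real.exp (δ * t) * (1 + γ) ^ Np t ω * (1 - γ) ^ Nm t ω

/-- The minimal signed martingale density `Ẑ = E(-λ·M)` of Example 5.3: since
`-λ·M = -(δ/(2γ)) N⁺ + (δ/(2γ)) N⁻` (the drifts cancel), its Doléans exponential is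
`Ẑ_t = (1 - δ/(2γ))^{N⁺_t} (1 + δ/(2γ))^{N⁻_t}`. -/
noncomputable def minimalDensity (γ δ : ℝ) (Np Nm : ℝ → Ω → ℕ)
    (t : ℝ) (ω : Ω) : ℝ :=
  (1 - δ / (2 * γ)) ^ Np t ω * (1 + δ / (2 * γ)) ^ Nm t ω

/-- The density process `Z = E(β n⁺ + (β+2+ε) n⁻)` of Example 5.3, explicitly
`Z_t = e^{-(2β+2+ε)t} (1+β)^{N⁺_t} (β+3+ε)^{N⁻_t}`. -/
noncomputable def esscherDensity (β ε : ℝ) (Np Nm : ℝ → Ω → ℕ)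
    (t : ℝ) (ω : Ω) : ℝ :=
  Real.exp (-(2 * β + 2 + ε) * t) * (1 + β) ^ Np t ω * (β + 3 + ε) ^ Nm t ω

/-!
For (i): `Ẑ_T` carries the factor `(1 - δ/(2γ))^{N⁺_T}` with `1 - δ/(2γ) = -ε/2 < 0`, so `Ẑ_T < 0`
on the event `{N⁺_T = 1}`, which has positive Poisson probability.

For (ii): if `N, N'` are independent unit Poisson processes with independent increments, then
`e^{-(a+b-2)t} a^{N_t} b^{N'_t}` is a martingale for all `a, b ≥ 0`, by the Poisson generating
function `E[c^N] = e^{r(c-1)}`. The density process `Z` is this martingale for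
`(a, b) = (1+β, β+3+ε)`, `Z²` is a constant multiple of the one for `(a², b²)`, and, precisely
because `δ = (2+ε)γ`, `S Z / S₀` is the one for `(a, b) = ((1+γ)(1+β), (1-γ)(β+3+ε))`.
Bayes' formula turns the martingale property of `S Z` under `P` into that of `S` under `Q`.
-/

open ProbabilityTheory Real
open scoped ENNReal NNReal Nat

lemma lintegral_ofReal_pow_poissonMeasure (r : ℝ≥0) {c : ℝ} (hc : 0 ≤ c) :
    ∫⁻ n, ENNReal.ofReal (c ^ n) ∂poissonMeasure r = ENNReal.ofReal (exp (r * (c - 1))) := by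
  have hsum : HasSum (fun n : ℕ => exp (-r) * r ^ n / n ! * c ^ n) (exp (r * (c - 1))) := by
    have h := (NormedSpace.expSeries_div_hasSum_exp ((r : ℝ) * c)).mul_left (exp (-r))
    rw [← Real.exp_eq_exp_ℝ, ← Real.exp_add, show -(r : ℝ) + r * c = r * (c - 1) by ring] at h
    rwa [show (fun n : ℕ => exp (-r) * r ^ n / n ! * c ^ n) =
      fun n => exp (-r) * ((r * c) ^ n / n !) from funext fun n => by ring]
  rw [poissonMeasure, lintegral_sum_measure, ← hsum.tsum_eq,
    ENNReal.ofReal_tsum_of_nonneg (fun n => by positivity) hsum.summable]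
  congr 1 with n
  rw [lintegral_smul_measure, lintegral_dirac, smul_eq_mul, ENNReal.ofReal_mul (by positivity)]

lemma lintegral_ofReal_pow_mul_pow_of_indepFun {μ : Measure Ω} {X Y : Ω → ℕ}
    (hX : Measurable X) (hY : Measurable Y) {r : ℝ≥0}
    (hXlaw : μ.map X = poissonMeasure r) (hYlaw : μ.map Y = poissonMeasure r)
    (hXY : IndepFun X Y μ) {a b : ℝ} (ha : 0 ≤ a) (hb : 0 ≤ b) :
    ∫⁻ ω, ENNReal.ofReal (a ^ X ω * b ^ Y ω) ∂μ = ENNReal.ofReal (exp (r * (a + b - 2))) := by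
  have hpow : ∀ c : ℝ, Measurable fun n : ℕ => ENNReal.ofReal (c ^ n) := fun _ => .of_discrete
  simp_rw [ENNReal.ofReal_mul (pow_nonneg ha _)]
  rw [lintegral_mul_eq_lintegral_mul_lintegral_of_indepFun''
      (f := fun ω => ENNReal.ofReal (a ^ X ω)) (g := fun ω => ENNReal.ofReal (b ^ Y ω))
      ((hpow a).comp hX).aemeasurable ((hpow b).comp hY).aemeasurable
      (hXY.comp (hpow a) (hpow b)),
    ← lintegral_map (hpow a) hX, ← lintegral_map (hpow b) hY, hXlaw, hYlaw,
    lintegral_ofReal_pow_poissonMeasure r ha, lintegral_ofReal_pow_poissonMeasure r hb,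
    ← ENNReal.ofReal_mul (exp_nonneg _), ← exp_add]
  ring_nf

lemma setLIntegral_eq_lintegral_indicator_one_mul {μ : Measure Ω} {A : Set Ω}
    (hA : MeasurableSet A) (f : Ω → ℝ≥0∞) :
    ∫⁻ ω in A, f ω ∂μ = ∫⁻ ω, A.indicator 1 ω * f ω ∂μ := by
  rw [← lintegral_indicator hA]
  congr 1 with ω
  by_cases h : ω ∈ A <;> simp [h]

section WithDensity

variable {μ : Measure Ω} {Z X : Ω → ℝ}

lemma setIntegral_withDensity_ofReal (hZ : Measurable Z) (hX : Measurable X) (hX0 : 0 ≤ X)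
    {A : Set Ω} (hA : MeasurableSet A) :
    ∫ ω in A, X ω ∂μ.withDensity (fun ω => ENNReal.ofReal (Z ω)) =
      (∫⁻ ω in A, ENNReal.ofReal (X ω * Z ω) ∂μ).toReal := by
  rw [integral_eq_lintegral_of_nonneg_ae (ae_of_all _ hX0) hX.aestronglyMeasurable,
    restrict_withDensity hA, lintegral_withDensity_eq_lintegral_mul _
      hZ.ennreal_ofReal hX.ennreal_ofReal]
  refine congrArg _ (lintegral_congr fun ω => ?_)
  rw [Pi.mul_apply, ENNReal.ofReal_mul (hX0 ω), mul_comm]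

lemma integrable_withDensity_ofReal (hZ : Measurable Z) (hX : Measurable X) (hX0 : 0 ≤ X)
    (hXZ : ∫⁻ ω, ENNReal.ofReal (X ω * Z ω) ∂μ ≠ ∞) :
    Integrable X (μ.withDensity fun ω => ENNReal.ofReal (Z ω)) := by
  refine ⟨hX.aestronglyMeasurable, ?_⟩
  rw [hasFiniteIntegral_iff_ofReal (ae_of_all _ hX0), lintegral_withDensity_eq_lintegral_mul _
    hZ.ennreal_ofReal hX.ennreal_ofReal]
  simpa only [Pi.mul_apply, mul_comm (ENNReal.ofReal (Z _)), ← ENNReal.ofReal_mul (hX0 _),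
    lt_top_iff_ne_top] using hXZ

theorem condExp_withDensity_ofReal_eq {m₀ : MeasurableSpace Ω} (hm : m₀ ≤ m) {Y : Ω → ℝ}
    [IsFiniteMeasure (μ.withDensity fun ω => ENNReal.ofReal (Z ω))]
    (hZ : Measurable[m] Z) (hX : Measurable[m] X) (hX0 : 0 ≤ X)
    (hY : StronglyMeasurable[m₀] Y) (hY0 : 0 ≤ Y)
    (hXZ : ∫⁻ ω, ENNReal.ofReal (X ω * Z ω) ∂μ ≠ ∞)
    (hXY : ∀ A, MeasurableSet[m₀] A →
      ∫⁻ ω in A, ENNReal.ofReal (X ω * Z ω) ∂μ = ∫⁻ ω in A, ENNReal.ofReal (Y ω * Z ω) ∂μ) :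
    (μ.withDensity fun ω => ENNReal.ofReal (Z ω))[X | m₀]
      =ᵐ[μ.withDensity fun ω => ENNReal.ofReal (Z ω)] Y := by
  have hYm : Measurable[m] Y := (hY.mono hm).measurable
  have hYZ : ∫⁻ ω, ENNReal.ofReal (Y ω * Z ω) ∂μ ≠ ∞ := by
    have h := hXY Set.univ MeasurableSet.univ
    rw [Measure.restrict_univ] at h
    rwa [← h]
  refine (ae_eq_condExp_of_forall_setIntegral_eq hm
    (integrable_withDensity_ofReal hZ hX hX0 hXZ)
    (fun _ _ _ => (integrable_withDensity_ofReal hZ hYm hY0 hYZ).integrableOn)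
    (fun A hA _ => ?_) hY.aestronglyMeasurable).symm
  rw [setIntegral_withDensity_ofReal hZ hYm hY0 (hm A hA),
    setIntegral_withDensity_ofReal hZ hX hX0 (hm A hA), hXY A hA]

end WithDensity

section PoissonPair

variable {μ : Measure Ω} {F : Filtration ℝ m} {N N' : ℝ → Ω → ℕ}

namespace IsUnitPoissonProcess

variable (hN : IsUnitPoissonProcess μ F N)
include hN

lemma apply_zero (ω : Ω) : N 0 ω = 0 := hN.1 ω

lemma mono (ω : Ω) {s t : ℝ} (hs : 0 ≤ s) (hst : s ≤ t) : N s ω ≤ N t ω := hN.2.1 ω s t hs hst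

lemma adapted (t : ℝ) : Measurable[F t] (N t) := hN.2.2.1 t

lemma measurable (t : ℝ) : Measurable (N t) := (hN.adapted t).mono (F.le t) le_rfl

lemma map_sub {s t : ℝ} (hs : 0 ≤ s) (hst : s ≤ t) :
    μ.map (fun ω => N t ω - N s ω) = poissonMeasure (t - s).toNNReal :=
  hN.2.2.2.1 s t hs hst

lemma measure_preimage_singleton_pos {t : ℝ} (ht : 0 < t) (k : ℕ) : 0 < μ (N t ⁻¹' {k}) := by
  have hlaw := hN.map_sub le_rfl ht.le
  simp only [hN.apply_zero, Nat.sub_zero, sub_zero] at hlaw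
  rw [← Measure.map_apply (hN.measurable t) (measurableSet_singleton k), hlaw]
  exact (ENNReal.toReal_pos_iff.1
    (poissonMeasure_real_singleton_pos k (Real.toNNReal_pos.2 ht))).1

end IsUnitPoissonProcess

structure IsIndepUnitPoissonPair (μ : Measure Ω) (F : Filtration ℝ m)
    (N N' : ℝ → Ω → ℕ) : Prop where
  left : IsUnitPoissonProcess μ F N
  right : IsUnitPoissonProcess μ F N'
  indepFun_increments : ∀ s t, 0 ≤ s → s ≤ t →
    IndepFun (fun ω => N t ω - N s ω) (fun ω => N' t ω - N' s ω) μ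
  indep_increments : ∀ s t, 0 ≤ s → s ≤ t →
    Indep (MeasurableSpace.comap (fun ω => (N t ω - N s ω, N' t ω - N' s ω)) inferInstance)
      (F s) μ

noncomputable def poissonExpMartingale (a b : ℝ) (N N' : ℝ → Ω → ℕ) (t : ℝ) (ω : Ω) : ℝ :=
  exp (-(a + b - 2) * t) * a ^ N t ω * b ^ N' t ω

lemma poissonExpMartingale_nonneg {a b : ℝ} (ha : 0 ≤ a) (hb : 0 ≤ b) (t : ℝ) (ω : Ω) :
    0 ≤ poissonExpMartingale a b N N' t ω := by
  unfold poissonExpMartingale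
  positivity

lemma measurable_poissonExpMartingale (hN : IsUnitPoissonProcess μ F N)
    (hN' : IsUnitPoissonProcess μ F N') (a b t : ℝ) :
    Measurable[F t] (poissonExpMartingale a b N N' t) :=
  (measurable_const.mul (measurable_const.pow (hN.adapted t))).mul
    (measurable_const.pow (hN'.adapted t))

lemma poissonExpMartingale_eq_mul_increment {a b s t : ℝ} {ω : Ω}
    (hN : N s ω ≤ N t ω) (hN' : N' s ω ≤ N' t ω) :
    poissonExpMartingale a b N N' t ω = poissonExpMartingale a b N N' s ω *
      (exp (-(a + b - 2) * (t - s)) * (a ^ (N t ω - N s ω) * b ^ (N' t ω - N' s ω))) := by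
  unfold poissonExpMartingale
  rw [← pow_mul_pow_sub a hN, ← pow_mul_pow_sub b hN',
    show -(a + b - 2) * t = -(a + b - 2) * s + -(a + b - 2) * (t - s) by ring, exp_add]
  ring

lemma poissonExpMartingale_sq (a b t : ℝ) (ω : Ω) :
    poissonExpMartingale a b N N' t ω ^ 2 =
      exp (((a - 1) ^ 2 + (b - 1) ^ 2) * t) * poissonExpMartingale (a ^ 2) (b ^ 2) N N' t ω := by
  have hexp : exp (-(a + b - 2) * t) ^ 2 =
      exp (((a - 1) ^ 2 + (b - 1) ^ 2) * t) * exp (-(a ^ 2 + b ^ 2 - 2) * t) := by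
    rw [← exp_add, ← exp_nat_mul]
    ring_nf
  unfold poissonExpMartingale
  rw [mul_pow, mul_pow, hexp]
  simp only [← pow_mul, mul_comm _ 2]
  ring

namespace IsIndepUnitPoissonPair

variable (hP : IsIndepUnitPoissonPair μ F N N')
include hP

theorem lintegral_ofReal_increment {a b s t : ℝ} (ha : 0 ≤ a) (hb : 0 ≤ b) (hs : 0 ≤ s)
    (hst : s ≤ t) :
    ∫⁻ ω, ENNReal.ofReal (exp (-(a + b - 2) * (t - s)) *
      (a ^ (N t ω - N s ω) * b ^ (N' t ω - N' s ω))) ∂μ = 1 := by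
  simp only [ENNReal.ofReal_mul (exp_nonneg _)]
  rw [lintegral_const_mul' _ _ ENNReal.ofReal_ne_top,
    lintegral_ofReal_pow_mul_pow_of_indepFun (X := fun ω => N t ω - N s ω)
      (Y := fun ω => N' t ω - N' s ω) ((hP.left.measurable t).sub (hP.left.measurable s))
      ((hP.right.measurable t).sub (hP.right.measurable s)) (hP.left.map_sub hs hst)
      (hP.right.map_sub hs hst) (hP.indepFun_increments s t hs hst) ha hb,
    Real.coe_toNNReal _ (sub_nonneg.2 hst), ← ENNReal.ofReal_mul (exp_nonneg _), ← exp_add,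
    ← ENNReal.ofReal_one, ← exp_zero]
  ring_nf

theorem lintegral_mul_ofReal_poissonExpMartingale {a b s t : ℝ} (ha : 0 ≤ a) (hb : 0 ≤ b)
    (hs : 0 ≤ s) (hst : s ≤ t) {g : Ω → ℝ≥0∞} (hg : Measurable[F s] g) :
    ∫⁻ ω, g ω * ENNReal.ofReal (poissonExpMartingale a b N N' t ω) ∂μ =
      ∫⁻ ω, g ω * ENNReal.ofReal (poissonExpMartingale a b N N' s ω) ∂μ := by
  let Δ : Ω → ℕ × ℕ := fun ω => (N t ω - N s ω, N' t ω - N' s ω)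
  let incr : ℕ × ℕ → ℝ≥0∞ := fun k =>
    ENNReal.ofReal (exp (-(a + b - 2) * (t - s)) * (a ^ k.1 * b ^ k.2))
  have hΔ : Measurable Δ :=
    ((hP.left.measurable t).sub (hP.left.measurable s)).prodMk
      ((hP.right.measurable t).sub (hP.right.measurable s))
  have hsplit : ∀ ω, g ω * ENNReal.ofReal (poissonExpMartingale a b N N' t ω) =
      g ω * ENNReal.ofReal (poissonExpMartingale a b N N' s ω) * incr (Δ ω) := fun ω => by
    rw [poissonExpMartingale_eq_mul_increment (hP.left.mono ω hs hst)
      (hP.right.mono ω hs hst), ENNReal.ofReal_mul (poissonExpMartingale_nonneg ha hb s ω),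
      mul_assoc]
  rw [lintegral_congr hsplit,
    lintegral_mul_eq_lintegral_mul_lintegral_of_independent_measurableSpace
      (f := fun ω => g ω * ENNReal.ofReal (poissonExpMartingale a b N N' s ω))
      (g := fun ω => incr (Δ ω)) (F.le s) hΔ.comap_le (hP.indep_increments s t hs hst).symm
      (hg.mul (measurable_poissonExpMartingale hP.left hP.right a b s).ennreal_ofReal)
      ((Measurable.of_discrete : Measurable incr).comp (comap_measurable Δ)),
    show ∫⁻ ω, incr (Δ ω) ∂μ = 1 from hP.lintegral_ofReal_increment ha hb hs hst, mul_one]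

theorem lintegral_ofReal_poissonExpMartingale [IsProbabilityMeasure μ] {a b t : ℝ} (ha : 0 ≤ a)
    (hb : 0 ≤ b) (ht : 0 ≤ t) :
    ∫⁻ ω, ENNReal.ofReal (poissonExpMartingale a b N N' t ω) ∂μ = 1 := by
  have h := hP.lintegral_mul_ofReal_poissonExpMartingale ha hb le_rfl ht
    (measurable_const : Measurable[F 0] fun _ => (1 : ℝ≥0∞))
  simpa [poissonExpMartingale, hP.left.apply_zero, hP.right.apply_zero, measure_univ] using h

theorem memLp_two_poissonExpMartingale [IsProbabilityMeasure μ] (a b : ℝ) {t : ℝ} (ht : 0 ≤ t) :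
    MemLp (poissonExpMartingale a b N N' t) 2 μ := by
  have hmeas := (measurable_poissonExpMartingale hP.left hP.right a b t).mono (F.le t) le_rfl
  refine (memLp_two_iff_integrable_sq hmeas.aestronglyMeasurable).2
    ⟨(hmeas.pow_const 2).aestronglyMeasurable, ?_⟩
  rw [hasFiniteIntegral_iff_ofReal (ae_of_all _ fun ω => sq_nonneg _)]
  simp_rw [poissonExpMartingale_sq, ENNReal.ofReal_mul (exp_nonneg _)]
  rw [lintegral_const_mul' _ _ ENNReal.ofReal_ne_top,
    hP.lintegral_ofReal_poissonExpMartingale (sq_nonneg a) (sq_nonneg b) ht, mul_one]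
  exact ENNReal.ofReal_lt_top

end IsIndepUnitPoissonPair

end PoissonPair

section JumpModel

variable {μ : Measure Ω} {F : Filtration ℝ m} {Np Nm : ℝ → Ω → ℕ}

lemma minimalDensity_neg_of_odd {γ δ t : ℝ} {ω : Ω} (hγδ : 1 < δ / (2 * γ))
    (hodd : Odd (Np t ω)) : minimalDensity γ δ Np Nm t ω < 0 :=
  mul_neg_of_neg_of_pos (hodd.pow_neg (by linarith)) (pow_pos (by linarith) _)

lemma measurable_jumpStock (hNp : IsUnitPoissonProcess μ F Np)
    (hNm : IsUnitPoissonProcess μ F Nm) (S0 γ δ t : ℝ) :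
    Measurable[F t] (jumpStock S0 γ δ Np Nm t) :=
  (measurable_const.mul (measurable_const.pow (hNp.adapted t))).mul
    (measurable_const.pow (hNm.adapted t))

lemma measurable_esscherDensity (hNp : IsUnitPoissonProcess μ F Np)
    (hNm : IsUnitPoissonProcess μ F Nm) (β ε t : ℝ) :
    Measurable[F t] (esscherDensity β ε Np Nm t) :=
  (measurable_const.mul (measurable_const.pow (hNp.adapted t))).mul
    (measurable_const.pow (hNm.adapted t))

lemma jumpStock_nonneg {S0 γ : ℝ} (hS0 : 0 ≤ S0) (hγ0 : -1 ≤ γ) (hγ1 : γ ≤ 1) (δ t : ℝ)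
    (ω : Ω) : 0 ≤ jumpStock S0 γ δ Np Nm t ω := by
  have : 0 ≤ 1 + γ := by linarith
  have : 0 ≤ 1 - γ := by linarith
  unfold jumpStock
  positivity

lemma jumpStock_eq_smul (S0 γ δ t : ℝ) :
    jumpStock S0 γ δ Np Nm t = S0 • jumpStock 1 γ δ Np Nm t := by
  funext ω
  simp only [jumpStock, Pi.smul_apply, smul_eq_mul]
  ring

lemma esscherDensity_eq_poissonExpMartingale (β ε : ℝ) :
    esscherDensity β ε Np Nm = poissonExpMartingale (1 + β) (β + 3 + ε) Np Nm := by
  funext t ω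
  unfold esscherDensity poissonExpMartingale
  ring_nf

lemma esscherDensity_pos {β : ℝ} (hβ : -1 < β) {ε : ℝ} (hε : -2 < ε) (t : ℝ) (ω : Ω) :
    0 < esscherDensity β ε Np Nm t ω := by
  have : 0 < 1 + β := by linarith
  have : 0 < β + 3 + ε := by linarith
  unfold esscherDensity
  positivity

lemma jumpStock_one_mul_esscherDensity {γ δ ε : ℝ} (hδ : δ = (2 + ε) * γ) (β t : ℝ) (ω : Ω) :
    jumpStock 1 γ δ Np Nm t ω * esscherDensity β ε Np Nm t ω =
      poissonExpMartingale ((1 + γ) * (1 + β)) ((1 - γ) * (β + 3 + ε)) Np Nm t ω := by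
  have hexp : exp (δ * t) * exp (-(2 * β + 2 + ε) * t) =
      exp (-((1 + γ) * (1 + β) + (1 - γ) * (β + 3 + ε) - 2) * t) := by
    rw [← exp_add, hδ]
    ring_nf
  unfold jumpStock esscherDensity poissonExpMartingale
  rw [← hexp, mul_pow, mul_pow]
  ring

end JumpModel

namespace IsIndepUnitPoissonPair

variable {μ : Measure Ω} {F : Filtration ℝ m} {Np Nm : ℝ → Ω → ℕ}
  (hP : IsIndepUnitPoissonPair μ F Np Nm)
include hP

theorem isProbabilityMeasure_withDensity_esscherDensity [IsProbabilityMeasure μ] {β ε T : ℝ}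
    (hβ : -1 ≤ β) (hβε : 0 ≤ β + 3 + ε) (hT : 0 ≤ T) :
    IsProbabilityMeasure
      (μ.withDensity fun ω => ENNReal.ofReal (esscherDensity β ε Np Nm T ω)) :=
  ⟨by rw [withDensity_apply _ MeasurableSet.univ, Measure.restrict_univ,
    esscherDensity_eq_poissonExpMartingale,
    hP.lintegral_ofReal_poissonExpMartingale (by linarith) hβε hT]⟩

variable {γ δ β ε : ℝ} (hγ0 : -1 ≤ γ) (hγ1 : γ ≤ 1) (hβ : -1 ≤ β) (hβε : 0 ≤ β + 3 + ε)
  (hδ : δ = (2 + ε) * γ)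
include hγ0 hγ1 hβ hβε hδ

theorem lintegral_mul_ofReal_jumpStock_mul_esscherDensity {t T : ℝ} (ht : 0 ≤ t) (htT : t ≤ T)
    {g : Ω → ℝ≥0∞} (hg : Measurable[F t] g) :
    ∫⁻ ω, g ω * ENNReal.ofReal (jumpStock 1 γ δ Np Nm t ω * esscherDensity β ε Np Nm T ω) ∂μ =
      ∫⁻ ω, g ω * ENNReal.ofReal
        (poissonExpMartingale ((1 + γ) * (1 + β)) ((1 - γ) * (β + 3 + ε)) Np Nm t ω) ∂μ := by
  have hS := jumpStock_nonneg (Np := Np) (Nm := Nm) zero_le_one hγ0 hγ1 δ t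
  calc _ = ∫⁻ ω, (g ω * ENNReal.ofReal (jumpStock 1 γ δ Np Nm t ω)) *
          ENNReal.ofReal (poissonExpMartingale (1 + β) (β + 3 + ε) Np Nm T ω) ∂μ := by
        simp_rw [ENNReal.ofReal_mul (hS _), esscherDensity_eq_poissonExpMartingale, mul_assoc]
    _ = ∫⁻ ω, (g ω * ENNReal.ofReal (jumpStock 1 γ δ Np Nm t ω)) *
          ENNReal.ofReal (poissonExpMartingale (1 + β) (β + 3 + ε) Np Nm t ω) ∂μ :=
        hP.lintegral_mul_ofReal_poissonExpMartingale (by linarith) hβε ht htT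
          (hg.mul (measurable_jumpStock hP.left hP.right 1 γ δ t).ennreal_ofReal)
    _ = _ := lintegral_congr fun ω => by
        rw [mul_assoc, ← ENNReal.ofReal_mul (hS ω), ← esscherDensity_eq_poissonExpMartingale,
          jumpStock_one_mul_esscherDensity hδ]

theorem setLIntegral_ofReal_jumpStock_mul_esscherDensity {s t T : ℝ} (hs : 0 ≤ s)
    (hst : s ≤ t) (htT : t ≤ T) {A : Set Ω} (hA : MeasurableSet[F s] A) :
    ∫⁻ ω in A, ENNReal.ofReal (jumpStock 1 γ δ Np Nm t ω * esscherDensity β ε Np Nm T ω) ∂μ =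
      ∫⁻ ω in A, ENNReal.ofReal
        (jumpStock 1 γ δ Np Nm s ω * esscherDensity β ε Np Nm T ω) ∂μ := by
  have h1A : Measurable[F s] (A.indicator 1 : Ω → ℝ≥0∞) :=
    (measurable_const : Measurable[F s] fun _ => (1 : ℝ≥0∞)).indicator hA
  rw [setLIntegral_eq_lintegral_indicator_one_mul (F.le s A hA),
    setLIntegral_eq_lintegral_indicator_one_mul (F.le s A hA),
    hP.lintegral_mul_ofReal_jumpStock_mul_esscherDensity hγ0 hγ1 hβ hβε hδ (hs.trans hst) htT
      (h1A.mono (F.mono hst) le_rfl),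
    hP.lintegral_mul_ofReal_jumpStock_mul_esscherDensity hγ0 hγ1 hβ hβε hδ hs (hst.trans htT) h1A,
    hP.lintegral_mul_ofReal_poissonExpMartingale (by nlinarith) (by nlinarith) hs hst h1A]

theorem condExp_jumpStock_withDensity_esscherDensity [IsProbabilityMeasure μ] (S0 : ℝ)
    {s t T : ℝ} (hs : 0 ≤ s) (hst : s ≤ t) (htT : t ≤ T) :
    (μ.withDensity fun ω => ENNReal.ofReal (esscherDensity β ε Np Nm T ω))[
        jumpStock S0 γ δ Np Nm t | F s]
      =ᵐ[μ.withDensity fun ω => ENNReal.ofReal (esscherDensity β ε Np Nm T ω)]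
        jumpStock S0 γ δ Np Nm s := by
  have := hP.isProbabilityMeasure_withDensity_esscherDensity hβ hβε (hs.trans (hst.trans htT))
  have hS := jumpStock_nonneg (Np := Np) (Nm := Nm) zero_le_one hγ0 hγ1 δ
  have hSZ : ∫⁻ ω, ENNReal.ofReal
      (jumpStock 1 γ δ Np Nm t ω * esscherDensity β ε Np Nm T ω) ∂μ ≠ ∞ := by
    have h := hP.lintegral_mul_ofReal_jumpStock_mul_esscherDensity hγ0 hγ1 hβ hβε hδ
      (hs.trans hst) htT (measurable_const : Measurable[F t] fun _ => (1 : ℝ≥0∞))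
    simp only [one_mul] at h
    rw [h, hP.lintegral_ofReal_poissonExpMartingale (by nlinarith) (by nlinarith) (hs.trans hst)]
    exact ENNReal.one_ne_top
  have h := condExp_withDensity_ofReal_eq (F.le s)
    ((measurable_esscherDensity hP.left hP.right β ε T).mono (F.le T) le_rfl)
    ((measurable_jumpStock hP.left hP.right 1 γ δ t).mono (F.le t) le_rfl) (hS t)
    (measurable_jumpStock hP.left hP.right 1 γ δ s).stronglyMeasurable (hS s) hSZ
    fun A hA => hP.setLIntegral_ofReal_jumpStock_mul_esscherDensity hγ0 hγ1 hβ hβε hδ hs hst htT hA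
  rw [jumpStock_eq_smul S0 γ δ t, jumpStock_eq_smul S0 γ δ s]
  filter_upwards [condExp_smul S0 (jumpStock 1 γ δ Np Nm t) (F s), h] with ω hsmul hω
  rw [hsmul, Pi.smul_apply, Pi.smul_apply, hω]

end IsIndepUnitPoissonPair

theorem jump_example_VOMM_fails_but_P2e_nonempty_general
    (μ : Measure Ω) [IsProbabilityMeasure μ]
    (F : Filtration ℝ m) (T : ℝ) (hT : 0 < T)
    (Np Nm : ℝ → Ω → ℕ)
    (hNp : IsUnitPoissonProcess μ F Np)
    (hNm : IsUnitPoissonProcess μ F Nm)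
    -- independence of the two Poisson processes (of their joint increments)
    (hindep : ∀ s t, 0 ≤ s → s ≤ t →
      ProbabilityTheory.IndepFun
        (fun ω => Np t ω - Np s ω) (fun ω => Nm t ω - Nm s ω) μ)
    (hindep' : ∀ s t, 0 ≤ s → s ≤ t →
      ProbabilityTheory.Indep
        (MeasurableSpace.comap
          (fun ω => (Np t ω - Np s ω, Nm t ω - Nm s ω)) inferInstance) (F s) μ)
    (S0 γ δ ε β : ℝ)
    (hγ0 : 0 < γ) (hγ1 : γ < 1) (hε : 0 < ε) (hβ : -1 < β)
    (hδ : δ = (2 + ε) * γ) :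
    -- (i) the minimal signed martingale density takes negative values
    0 < μ {ω | ∃ t ∈ Set.Icc (0 : ℝ) T, minimalDensity γ δ Np Nm t ω < 0} ∧
    -- (ii) an explicit element of P²_e(S)
    (let ν : Measure Ω :=
      μ.withDensity (fun ω => ENNReal.ofReal (esscherDensity β ε Np Nm T ω))
    IsProbabilityMeasure ν ∧
      ν ≪ μ ∧ μ ≪ ν ∧
      MemLp (fun ω => esscherDensity β ε Np Nm T ω) 2 μ ∧
      ∀ s t, 0 ≤ s → s ≤ t → t ≤ T →
        ν[jumpStock S0 γ δ Np Nm t | F s] =ᵐ[ν] jumpStock S0 γ δ Np Nm s) := by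
  have hP : IsIndepUnitPoissonPair μ F Np Nm := ⟨hNp, hNm, hindep, hindep'⟩
  have hratio : 1 < δ / (2 * γ) := by
    rw [hδ, lt_div_iff₀ (by positivity)]
    nlinarith
  refine ⟨(hNp.measure_preimage_singleton_pos hT 1).trans_le (measure_mono fun ω hω =>
      ⟨T, ⟨hT.le, le_rfl⟩, minimalDensity_neg_of_odd hratio (hω.symm ▸ odd_one)⟩),
    hP.isProbabilityMeasure_withDensity_esscherDensity hβ.le (by linarith) hT.le,
    withDensity_absolutelyContinuous _ _,
    withDensity_absolutelyContinuous'
      ((measurable_esscherDensity hNp hNm β ε T).mono (F.le T) le_rfl).ennreal_ofReal.aemeasurable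
      (ae_of_all _ fun ω => (ENNReal.ofReal_pos.2 (esscherDensity_pos hβ (by linarith) T ω)).ne'),
    ?_, fun s t hs hst htT => hP.condExp_jumpStock_withDensity_esscherDensity (by linarith)
      hγ1.le hβ.le (by linarith) hδ S0 hs hst htT⟩
  rw [esscherDensity_eq_poissonExpMartingale]
  exact hP.memLp_two_poissonExpMartingale _ _ hT.le

/-- Example 5.3.  `N⁺, N⁻` are independent unit-intensity Poisson
processes, `S` is the jump model `dS = S₋(γ dn⁺ - γ dn⁻ + δ dt)` with `γ ∈ (0,1)`,
`δ = (2+ε)γ`, `ε > 0`.  Then: (i) the minimal signed martingale density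
`Ẑ = E(-λ·M)` takes negative values with positive probability; (ii) for any
`β > -1`, the measure `dQ = E(β n⁺ + (β+2+ε) n⁻)_T dP` is a probability measure
equivalent to `P` with square-integrable density under which `S` is a martingale
on `[0,T]`; in particular `P²_e(S) ≠ ∅`. -/
theorem jump_example_VOMM_fails_but_P2e_nonempty
    (μ : Measure Ω) [IsProbabilityMeasure μ]
    (F : Filtration ℝ m) (T : ℝ) (hT : 0 < T)
    (Np Nm : ℝ → Ω → ℕ)
    (hNp : IsUnitPoissonProcess μ F Np)
    (hNm : IsUnitPoissonProcess μ F Nm)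
    -- independence of the two Poisson processes (of their joint increments)
    (hindep : ∀ s t, 0 ≤ s → s ≤ t →
      ProbabilityTheory.IndepFun
        (fun ω => Np t ω - Np s ω) (fun ω => Nm t ω - Nm s ω) μ)
    (hindep' : ∀ s t, 0 ≤ s → s ≤ t →
      ProbabilityTheory.Indep
        (MeasurableSpace.comap
          (fun ω => (Np t ω - Np s ω, Nm t ω - Nm s ω)) inferInstance) (F s) μ)
    (S0 γ δ ε β : ℝ)
    (hS0 : 0 < S0) (hγ0 : 0 < γ) (hγ1 : γ < 1) (hε : 0 < ε) (hβ : -1 < β)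
    (hδ : δ = (2 + ε) * γ) :
    -- (i) the minimal signed martingale density takes negative values
    0 < μ {ω | ∃ t ∈ Set.Icc (0 : ℝ) T, minimalDensity γ δ Np Nm t ω < 0} ∧
    -- (ii) an explicit element of P²_e(S)
    (let ν : Measure Ω :=
      μ.withDensity (fun ω => ENNReal.ofReal (esscherDensity β ε Np Nm T ω))
    IsProbabilityMeasure ν ∧
      ν ≪ μ ∧ μ ≪ ν ∧
      MemLp (fun ω => esscherDensity β ε Np Nm T ω) 2 μ ∧
      ∀ s t, 0 ≤ s → s ≤ t → t ≤ T →
        ν[jumpStock S0 γ δ Np Nm t | F s] =ᵐ[ν] jumpStock S0 γ δ Np Nm s) :=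
  jump_example_VOMM_fails_but_P2e_nonempty_general μ F T hT Np Nm hNp hNm hindep hindep' S0 γ δ ε β
    hγ0 hγ1 hε hβ hδ
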